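/- Let U be a vector superspace with homogeneous basis {u_i}, V(U) the superalgebra of differential polynomials in the u_i, and suppose a λ-bracket on V(U) is given via the master formula from values {u_i λ u_j}. Then the λ-bracket satisfies the skew-symmetry axiom {a λ b} = -(-1)^{|a||b|}{b_{-λ-∂} a} for all a, b ∈ V(U) if and only if {u_i λ u_j} = -(-1)^{|u_i||u_j|}{u_j_{-λ-∂} u_i} holds for all basis elements u_i, u_j. -/

import Mathlib

noncomputable section

/-- A differential superalgebra: a `ℤ/2`-graded associative unital `ℂ`-algebra,
supercommutative, with an even derivation `D`. -/
class DiffSuperAlg (V : Type*) extends Ring V, Algebra ℂ V where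
  grading : ZMod 2 → Submodule ℂ V
  gradedAlgebra : GradedAlgebra grading
  D : V → V
  superComm : ∀ (i j : ZMod 2), ∀ a ∈ grading i, ∀ b ∈ grading j,
      a * b = ((-1 : ℂ) ^ (i.val * j.val)) • (b * a)
  D_add : ∀ a b, D (a + b) = D a + D b
  D_smul : ∀ (c : ℂ) (a : V), D (c • a) = c • D a
  D_mul : ∀ a b, D (a * b) = D a * b + a * D b
  D_even : ∀ (i : ZMod 2), ∀ a ∈ grading i, D a ∈ grading i

namespace PDO

variable {V : Type*} [DiffSuperAlg V]

/-- Iterated derivation `∂ⁿ`. -/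
def Dit (n : ℕ) : V → V := (DiffSuperAlg.D (V := V))^[n]

/-- Generalized binomial coefficient `C(k, n)` for `k ∈ ℤ`. -/
def cchoose (k : ℤ) (n : ℕ) : ℂ :=
  (∏ i ∈ Finset.range n, ((k : ℂ) - (i : ℂ))) / (n.factorial : ℂ)

/-- Sign `(-1)^x` of a parity `x ∈ ℤ/2`. -/
def sgn (x : ZMod 2) : ℂ := (-1 : ℂ) ^ x.val

/-- A formal series `Σₖ (f k) ∂ᵏ` is an honest pseudo-differential operator when its
support is bounded above. -/
def IsPDO (f : ℤ → V) : Prop := ∃ N : ℤ, ∀ k : ℤ, N < k → f k = 0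

/-- `f` is monic of order `N`. -/
def IsMonic (f : ℤ → V) (N : ℤ) : Prop :=
  f N = 1 ∧ ∀ k : ℤ, N < k → f k = 0

/-- `f` is a differential operator of order at most `N`. -/
def IsDiffOpLE (f : ℤ → V) (N : ℕ) : Prop := ∀ k : ℤ, f k ≠ 0 → 0 ≤ k ∧ k ≤ (N : ℤ)

/-- All coefficients of `f` are homogeneous of parity `π`. -/
def IsHomog (f : ℤ → V) (π : ZMod 2) : Prop :=
  ∀ k : ℤ, f k ∈ DiffSuperAlg.grading (V := V) π

/-- The product of pseudo-differential operators, obtained from the rule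
`∂ᵏ v = Σₙ C(k,n) v⁽ⁿ⁾ ∂^(k-n)`. -/
def pmul (f g : ℤ → V) : ℤ → V := fun m =>
  ∑ᶠ (k : ℤ) (j : ℤ) (n : ℕ),
    if m = k + j - (n : ℤ) then cchoose k n • (f k * Dit n (g j)) else 0

/-- The identity operator. -/
def one : ℤ → V := fun m => if m = 0 then 1 else 0

/-- The operator `∂^e`. -/
def del (e : ℤ) : ℤ → V := fun m => if m = e then 1 else 0

/-- The adjoint `A*(∂) = Σₖ (-∂)ᵏ aₖ`, coefficientwise. -/
def adj (f : ℤ → V) : ℤ → V := fun m =>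
  ∑ᶠ n : ℕ, ((-1 : ℂ) ^ (m + (n : ℤ)) * cchoose (m + n) n) • Dit n (f (m + n))

/-- The residue `Res A = a₋₁`. -/
def res (f : ℤ → V) : V := f (-1)

/-- The differential part `A₊`. -/
def dplus (f : ℤ → V) : ℤ → V := fun k => if 0 ≤ k then f k else 0

/-- Coefficient of `z^m` in `A(z+∂)(B(z))`, where `(z+∂)⁻¹` is expanded as
`Σₙ (-1)ⁿ z^(-n-1) ∂ⁿ` (i.e. via the generalized binomial coefficients). -/
def symbolSub (f g : ℤ → V) : ℤ → V := fun m =>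
  ∑ᶠ (k : ℤ) (n : ℕ), cchoose k n • (f k * Dit n (g (m - k + n)))

/-- Coefficientwise derivation on `V[λ]`. -/
def Dp (P : Polynomial V) : Polynomial V :=
  P.sum fun n c => Polynomial.C (DiffSuperAlg.D c) * Polynomial.X ^ n

/-- Iterated coefficientwise derivation on `V[λ]`. -/
def DpIt (n : ℕ) : Polynomial V → Polynomial V := (Dp (V := V))^[n]

/-- Coefficient of `w^j` in `(w+λ+∂)ⁿ (G(w))`, where `G(w) = Σ_q g_q w^q`. -/
def expW (n : ℕ) (g : ℤ → V) (j : ℤ) : Polynomial V :=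
  ∑ᶠ (m : ℕ) (α : ℕ), if m + α ≤ n then
    (((n.choose m) * ((n - m).choose α) : ℕ) : ℂ) •
      ((Polynomial.X : Polynomial V) ^ (n - m - α) * Polynomial.C (Dit m (g (j - (α : ℤ)))))
  else 0

/-- Coefficient of `z^i w^j` in `A(z) ι_z(z-w-λ-∂)⁻¹ (B(w))`. -/
def iotaTermB (f g : ℤ → V) (i j : ℤ) : Polynomial V :=
  ∑ᶠ n : ℕ, Polynomial.C (f (i + n + 1)) * expW n g j

/-- `A(w+λ+∂)` applied to `P ∈ V[λ]`: coefficient of `w^j`. -/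
def appW (f : ℤ → V) (P : Polynomial V) (j : ℤ) : Polynomial V :=
  ∑ᶠ (n : ℕ) (β : ℕ),
    (cchoose (j + n + β) n * cchoose (j + β) β) •
      ((Polynomial.X : Polynomial V) ^ β * (Polynomial.C (f (j + n + β)) * DpIt n P))

/-- Symbol of the adjoint `A*` at `λ - z` (expanded for large `|z|`):
coefficient of `z^i`, as an element of `V[λ]`. -/
def adjSymb (g : ℤ → V) (i : ℤ) : Polynomial V :=
  ∑ᶠ β : ℕ, ((-1 : ℂ) ^ i * cchoose (i + β) β) •
    ((Polynomial.X : Polynomial V) ^ β * Polynomial.C (adj g (i + β)))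

/-- Coefficient of `z^i w^j` in `A(w+λ+∂) ι_z(z-w-λ-∂)⁻¹ ((B)*(λ-z))`. -/
def iotaTermA (f g : ℤ → V) (i j : ℤ) : Polynomial V :=
  ∑ᶠ n : ℕ, appW (fun k => f (k - n)) (adjSymb g (i + n + 1)) j

/-- Coefficient of `z^i w^j` of the right-hand side
`A(w+λ+∂) ι_z(z-w-λ-∂)⁻¹ (B*)(λ-z) - A(z) ι_z(z-w-λ-∂)⁻¹ B(w)`
of the super Adler identity, for the entries `f = A_{hj}` and `g = A_{ik}`. -/
def adlerRHS (f g : ℤ → V) (i j : ℤ) : Polynomial V :=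
  iotaTermA f g i j - iotaTermB f g i j

/-- Coefficient of `w^j` in `A(w+λ)`. -/
def symbLam (f : ℤ → V) (j : ℤ) : Polynomial V :=
  ∑ᶠ β : ℕ, cchoose (j + β) β •
    ((Polynomial.X : Polynomial V) ^ β * Polynomial.C (f (j + β)))

variable {I : Type*} [Fintype I] [DecidableEq I]

/-- The super Adler-type operator property of a matrix pseudo-differential operator,
with respect to a λ-bracket `Br` and the parity function `p` on the index set. -/
def IsSATO (p : I → ZMod 2) (Br : V → V → Polynomial V) (A : I → I → ℤ → V) : Prop :=
  ∀ i j h k : I, ∀ zp wp : ℤ,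
    Br (A i j zp) (A h k wp) =
      sgn (p i * p j + p i * p h + p j * p h) • adlerRHS (A h j) (A i k) zp wp

/-- Homogeneous component of parity `π` of an element of `V`. -/
def gpart (π : ZMod 2) (v : V) : V :=
  letI := DiffSuperAlg.gradedAlgebra (V := V)
  ((DirectSum.decompose (DiffSuperAlg.grading (V := V)) v) π : V)

/-- The `∘`-product `(a⊗v)∘(b⊗w) = (-1)^(|b||v|) ab⊗vw` on matrix pseudo-differential
operators. -/
def circMul (p : I → ZMod 2) (M N : I → I → ℤ → V) : I → I → ℤ → V :=
  fun i j m => ∑ t : I, ∑ π : ZMod 2,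
    sgn ((p t + p j) * π) • pmul (fun k => gpart π (M i t k)) (N t j) m

/-- The `⋆`-product `(a⊗v)⋆(b⊗w) = (-1)^(|b||v|+|a||b|) ab⊗vw` on matrix
pseudo-differential operators. -/
def starMul (p : I → ZMod 2) (M N : I → I → ℤ → V) : I → I → ℤ → V :=
  fun i j m => ∑ t : I, ∑ π : ZMod 2,
    sgn ((p t + p j) * π + (p i + p t) * (p t + p j)) •
      pmul (fun k => gpart π (M i t k)) (N t j) m

/-- The identity matrix operator `𝟙_I`. -/
def idMat : I → I → ℤ → V := fun i j m => if i = j ∧ m = 0 then 1 else 0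

/-- `M` is a monic matrix (pseudo-)differential operator of order `N`. -/
def IsMonicMat (M : I → I → ℤ → V) (N : ℤ) : Prop :=
  (∀ i j : I, M i j N = if i = j then (1 : V) else 0) ∧
  (∀ i j : I, ∀ k : ℤ, N < k → M i j k = 0)

/-- `∘`-powers of a matrix pseudo-differential operator. -/
def circPow (p : I → ZMod 2) (M : I → I → ℤ → V) : ℕ → I → I → ℤ → V
  | 0 => idMat
  | n + 1 => circMul p M (circPow p M n)

/-- Matrix-wise differential part. -/
def dplusMat (M : I → I → ℤ → V) : I → I → ℤ → V := fun i j => dplus (M i j)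

/-- `Res str M`, the supertrace of the residue. -/
def strRes (p : I → ZMod 2) (M : I → I → ℤ → V) : V :=
  ∑ i : I, sgn (p i) • res (M i i)

/-- `{a_(λ+∂) c}_→ b`, i.e. `Σₙ (a₍ₙ₎c) (λ+∂)ⁿ b` for `P = {a_λ c}`. -/
def lamShift (P : Polynomial V) (b : V) : Polynomial V :=
  ∑ᶠ (n : ℕ) (m : ℕ), if m ≤ n then ((n.choose m : ℕ) : ℂ) •
    ((Polynomial.X : Polynomial V) ^ (n - m) * Polynomial.C (P.coeff n * Dit m b)) else 0

/-- `{b_(-λ-∂) a}` computed from `P = {b_λ a}`. -/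
def negLam (P : Polynomial V) : Polynomial V :=
  ∑ᶠ (n : ℕ) (m : ℕ), if m ≤ n then (((n.choose m : ℕ) : ℂ) * (-1 : ℂ) ^ n) •
    ((Polynomial.X : Polynomial V) ^ (n - m) * Polynomial.C (Dit m (P.coeff n))) else 0

end PDO

/-- A λ-bracket on a differential superalgebra: even, bilinear, sesquilinear,
satisfying the left and right Leibniz rules. -/
structure LambdaBracket (V : Type*) [DiffSuperAlg V] where
  br : V → V → Polynomial V
  add_left : ∀ a b c : V, br (a + b) c = br a c + br b c
  add_right : ∀ a b c : V, br a (b + c) = br a b + br a c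
  smul_left : ∀ (r : ℂ) (a b : V), br (r • a) b = r • br a b
  smul_right : ∀ (r : ℂ) (a b : V), br a (r • b) = r • br a b
  even : ∀ (i j : ZMod 2), ∀ a ∈ DiffSuperAlg.grading (V := V) i,
      ∀ b ∈ DiffSuperAlg.grading (V := V) j, ∀ n : ℕ,
      (br a b).coeff n ∈ DiffSuperAlg.grading (V := V) (i + j)
  sesq_left : ∀ a b : V, br (DiffSuperAlg.D a) b = -(Polynomial.X * br a b)
  sesq_right : ∀ a b : V,
      br a (DiffSuperAlg.D b) = Polynomial.X * br a b + PDO.Dp (br a b)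
  leibniz_left : ∀ (i j : ZMod 2), ∀ a ∈ DiffSuperAlg.grading (V := V) i,
      ∀ b ∈ DiffSuperAlg.grading (V := V) j, ∀ c : V,
      br a (b * c) = br a b * Polynomial.C c + PDO.sgn (i * j) • (Polynomial.C b * br a c)
  leibniz_right : ∀ (i j k : ZMod 2), ∀ a ∈ DiffSuperAlg.grading (V := V) i,
      ∀ b ∈ DiffSuperAlg.grading (V := V) j, ∀ c ∈ DiffSuperAlg.grading (V := V) k,
      br (a * b) c =
        PDO.sgn (j * k) • PDO.lamShift (br a c) b +
        PDO.sgn (i * (j + k)) • PDO.lamShift (br b c) a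

namespace PDO

variable {V : Type*} [DiffSuperAlg V]

/-- Skew-symmetry axiom: `{a_λ b} = -(-1)^(|a||b|) {b_(-λ-∂) a}`. -/
def SkewSymm (B : LambdaBracket V) : Prop :=
  ∀ (i j : ZMod 2), ∀ a ∈ DiffSuperAlg.grading (V := V) i,
    ∀ b ∈ DiffSuperAlg.grading (V := V) j,
    B.br a b = -(sgn (i * j) • negLam (B.br b a))

/-- Coefficient of `λ^l μ^m` in `{{a_λ b}_(λ+μ) c}`. -/
def jacComp (B : LambdaBracket V) (a b c : V) (l m : ℕ) : V :=
  ∑ᶠ n : ℕ, if n ≤ l then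
    (((l - n + m).choose m : ℕ) : ℂ) • (B.br ((B.br a b).coeff n) c).coeff (l - n + m)
  else 0

/-- Jacobi identity: `{a_λ {b_μ c}} = {{a_λ b}_(λ+μ) c} + (-1)^(|a||b|) {b_μ {a_λ c}}`,
written on the coefficient of `λ^l μ^m`. -/
def Jacobi (B : LambdaBracket V) : Prop :=
  ∀ (i j : ZMod 2), ∀ a ∈ DiffSuperAlg.grading (V := V) i,
    ∀ b ∈ DiffSuperAlg.grading (V := V) j, ∀ c : V, ∀ l m : ℕ,
    (B.br a ((B.br b c).coeff m)).coeff l =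
      jacComp B a b c l m + sgn (i * j) • (B.br b ((B.br a c).coeff l)).coeff m

/-- The family `u` differentially generates `V`. -/
def diffGen (u : Set V) : Prop :=
  Algebra.adjoin ℂ {x : V | ∃ v ∈ u, ∃ n : ℕ, x = Dit n v} = ⊤

end PDO

/-!
Call homogeneous `a, b` a skew pair if `{a_λ b} = -(-1)^(|a||b|) {b_(-λ-∂) a}`. The substitution
`λ ↦ -λ-∂` is an involution of `V[λ]`, since it fixes constants and turns `λ + ∂` into `-λ`;
hence being a skew pair is symmetric in `a` and `b`. For fixed `a`, sesquilinearity makes the skew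
partners `b` of `a` closed under `∂`, and the two Leibniz rules make them closed under products,
because `λ ↦ -λ-∂` carries `P(-λ-∂)` evaluated at `λ + ∂` on `c` back to `P(λ) c`. Taking
homogeneous components, the partners of `a` form a subspace containing every monomial in the
derivatives of the generators, that is, all of `V`. Applying this to a generator `a` and then, by
symmetry, to an arbitrary homogeneous `a` proves the theorem.
-/

open Polynomial
open DiffSuperAlg (D grading)

namespace PDO

variable {V : Type*} [DiffSuperAlg V]

lemma D_zero : D (0 : V) = 0 := by
  simpa using DiffSuperAlg.D_add (0 : V) 0

lemma D_one : D (1 : V) = 0 := by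
  simpa using DiffSuperAlg.D_mul (1 : V) 1

lemma Dit_succ_apply' (n : ℕ) (x : V) : Dit (n + 1) x = D (Dit n x) :=
  Function.iterate_succ_apply' _ _ _

lemma Dit_mem {π : ZMod 2} {x : V} (hx : x ∈ grading π) (n : ℕ) : Dit n x ∈ grading π := by
  induction n with
  | zero => exact hx
  | succ n ih => rw [Dit_succ_apply']; exact DiffSuperAlg.D_even _ _ ih

lemma Dp_monomial (n : ℕ) (a : V) : Dp (monomial n a) = monomial n (D a) := by
  rw [Dp, sum_monomial_index _ _ (by rw [D_zero, C_0, zero_mul]), C_mul_X_pow_eq_monomial]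

lemma coeff_Dp (P : V[X]) (k : ℕ) : (Dp P).coeff k = D (P.coeff k) := by
  rw [Dp, Polynomial.sum_def, finsetSum_coeff]
  simp only [coeff_C_mul_X_pow]
  rw [Finset.sum_ite_eq]
  split_ifs with h
  · rfl
  · rw [notMem_support_iff.mp h, D_zero]

lemma Dp_C_mul (a : V) (Q : V[X]) : Dp (C a * Q) = C (D a) * Q + C a * Dp Q := by
  ext k
  simp only [coeff_Dp, coeff_add, coeff_C_mul, DiffSuperAlg.D_mul]

lemma Dp_X_mul (Q : V[X]) : Dp (X * Q) = X * Dp Q := by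
  ext k
  rcases k with _ | k
  · simp only [coeff_Dp, coeff_X_mul_zero, D_zero]
  · simp only [coeff_Dp, coeff_X_mul]

def Dpₗ : Module.End ℂ V[X] where
  toFun := Dp
  map_add' P Q := by ext k; simp only [coeff_Dp, coeff_add, DiffSuperAlg.D_add]
  map_smul' c P := by
    ext k; simp only [coeff_Dp, coeff_smul, DiffSuperAlg.D_smul, RingHom.id_apply]

lemma Dp_add (P Q : V[X]) : Dp (P + Q) = Dp P + Dp Q := map_add Dpₗ P Q

lemma Dp_smul (c : ℂ) (P : V[X]) : Dp (c • P) = c • Dp P := map_smul Dpₗ c P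

lemma Dp_neg (P : V[X]) : Dp (-P) = -Dp P := map_neg Dpₗ P

lemma Dp_C (a : V) : Dp (C a) = C (D a) := Dp_monomial 0 a

/-- `λ + ∂`, with `∂` acting on the coefficients. -/
def lamAddD : Module.End ℂ V[X] := LinearMap.mulLeft ℂ (X : V[X]) + Dpₗ

lemma lamAddD_apply (Q : V[X]) : lamAddD Q = X * Q + Dp Q := rfl

lemma lamAddD_monomial (n : ℕ) (a : V) :
    lamAddD (monomial n a) = monomial (n + 1) a + monomial n (D a) := by
  rw [lamAddD_apply, X_mul_monomial, Dp_monomial]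

lemma lamAddD_C_mul (a : V) (Q : V[X]) : lamAddD (C a * Q) = C (D a) * Q + C a * lamAddD Q := by
  rw [lamAddD_apply, lamAddD_apply, Dp_C_mul, ← mul_assoc, X_mul_C, mul_assoc, mul_add]
  abel

lemma commute_mulLeft_X_Dpₗ : Commute (LinearMap.mulLeft ℂ (X : V[X])) Dpₗ :=
  LinearMap.ext fun Q => (Dp_X_mul Q).symm

lemma commute_lamAddD_Dpₗ : Commute (lamAddD (V := V)) Dpₗ :=
  commute_mulLeft_X_Dpₗ.add_left (Commute.refl _)

lemma Dpₗ_pow_C (m : ℕ) (a : V) : (Dpₗ ^ m) (C a) = C (Dit m a) := by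
  induction m with
  | zero => rfl
  | succ m ih =>
    rw [pow_succ', Module.End.mul_apply, ih, Dit_succ_apply']
    exact Dp_C _

lemma lamAddD_pow_C (n : ℕ) (a : V) :
    (lamAddD ^ n) (C a) =
      ∑ m ∈ Finset.range (n + 1), (n.choose m : ℂ) • ((X : V[X]) ^ (n - m) * C (Dit m a)) := by
  rw [lamAddD, commute_mulLeft_X_Dpₗ.add_pow, LinearMap.sum_apply, ← Finset.sum_range_reflect]
  refine Finset.sum_congr rfl fun m hm => ?_
  have hmn : m ≤ n := Nat.lt_succ_iff.mp (Finset.mem_range.mp hm)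
  rw [Nat.add_sub_cancel, Nat.sub_sub_self hmn, Nat.choose_symm hmn, Module.End.mul_apply,
    Module.End.mul_apply, Module.End.natCast_apply, ← Nat.cast_smul_eq_nsmul ℂ, map_smul,
    map_smul, Dpₗ_pow_C, LinearMap.pow_mulLeft, LinearMap.mulLeft_apply]

def Cₗ : V →ₗ[ℂ] V[X] where
  toFun := C
  map_add' _ _ := C_add
  map_smul' c a := (smul_C c a).symm

def negLamₗ : Module.End ℂ V[X] := lsum fun n => ((-1 : ℂ) ^ n • lamAddD ^ n) ∘ₗ Cₗ

lemma negLamₗ_apply (P : V[X]) : negLamₗ P = negLam P := by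
  have inner : ∀ n : ℕ, (∑ᶠ m : ℕ, if m ≤ n then (((n.choose m : ℕ) : ℂ) * (-1 : ℂ) ^ n) •
      ((X : V[X]) ^ (n - m) * C (Dit m (P.coeff n))) else 0) =
      (-1 : ℂ) ^ n • (lamAddD ^ n) (C (P.coeff n)) := by
    intro n
    rw [finsum_eq_sum_of_support_subset _ (s := Finset.range (n + 1)) fun m hm => ?_,
      lamAddD_pow_C, Finset.smul_sum]
    · refine Finset.sum_congr rfl fun m hm => ?_
      rw [if_pos (Nat.lt_succ_iff.mp (Finset.mem_range.mp hm)), mul_comm, mul_smul]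
    · by_contra hmn
      simp_all
  rw [negLam, finsum_congr inner, finsum_eq_sum_of_support_subset _ (s := P.support) fun n hn => ?_]
  · rfl
  · by_contra hn'
    simp_all

lemma negLam_add (P Q : V[X]) : negLam (P + Q) = negLam P + negLam Q := by
  simp only [← negLamₗ_apply, map_add]

lemma negLam_smul (c : ℂ) (P : V[X]) : negLam (c • P) = c • negLam P := by
  simp only [← negLamₗ_apply, map_smul]

lemma negLam_neg (P : V[X]) : negLam (-P) = -negLam P := by
  simp only [← negLamₗ_apply, map_neg]

lemma negLam_monomial (n : ℕ) (a : V) :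
    negLam (monomial n a) = (-1 : ℂ) ^ n • (lamAddD ^ n) (C a) := by
  rw [← negLamₗ_apply, negLamₗ, lsum_apply, sum_monomial_index _ _ (map_zero (_ : V →ₗ[ℂ] V[X]))]
  rfl

lemma negLam_C (a : V) : negLam (C a) = C a := by
  simpa using negLam_monomial 0 a

lemma negLam_X_mul (P : V[X]) : negLam (X * P) = -lamAddD (negLam P) := by
  induction P using Polynomial.induction_on' with
  | add P Q hP hQ => rw [mul_add, negLam_add, negLam_add, hP, hQ, map_add, neg_add]
  | monomial n a =>
    rw [X_mul_monomial, negLam_monomial, negLam_monomial, map_smul, pow_succ, mul_smul,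
      neg_one_smul, pow_succ', Module.End.mul_apply, smul_neg]

lemma negLam_Dp (P : V[X]) : negLam (Dp P) = Dp (negLam P) := by
  induction P using Polynomial.induction_on' with
  | add P Q hP hQ => rw [Dp_add, negLam_add, negLam_add, hP, hQ, Dp_add]
  | monomial n a =>
    rw [Dp_monomial, negLam_monomial, negLam_monomial, Dp_smul, ← Dp_C]
    exact congrArg _ (LinearMap.congr_fun (commute_lamAddD_Dpₗ.pow_left n).eq (C a))

lemma negLam_lamAddD (Q : V[X]) : negLam (lamAddD Q) = -(X * negLam Q) := by
  rw [lamAddD_apply, negLam_add, negLam_X_mul, negLam_Dp, lamAddD_apply]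
  abel

lemma negLam_lamAddD_pow (n : ℕ) (Q : V[X]) :
    negLam ((lamAddD ^ n) Q) = (-1 : ℂ) ^ n • (X ^ n * negLam Q) := by
  induction n with
  | zero => rw [pow_zero, Module.End.one_apply, pow_zero, pow_zero, one_mul, one_smul]
  | succ n ih =>
    rw [pow_succ', Module.End.mul_apply, negLam_lamAddD, ih, pow_succ', pow_succ', mul_smul_comm,
      mul_assoc, mul_smul, neg_one_smul]

lemma negLam_negLam (P : V[X]) : negLam (negLam P) = P := by
  induction P using Polynomial.induction_on' with
  | add P Q hP hQ => rw [negLam_add, negLam_add, hP, hQ]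
  | monomial n a =>
    rw [negLam_monomial, negLam_smul, negLam_lamAddD_pow, negLam_C, smul_smul, ← mul_pow,
      neg_one_mul, neg_neg, one_pow, one_smul, X_pow_mul, C_mul_X_pow_eq_monomial]

/-- `P ↦ P(λ+∂) Q = Σ pₙ (λ+∂)ⁿ Q`. -/
def lamShiftₗ (Q : V[X]) : Module.End ℂ V[X] :=
  lsum fun n => LinearMap.mulRight ℂ ((lamAddD ^ n) Q) ∘ₗ Cₗ

lemma lamShiftₗ_C_apply (P : V[X]) (b : V) : lamShiftₗ (C b) P = lamShift P b := by
  have inner : ∀ n : ℕ, (∑ᶠ m : ℕ, if m ≤ n then ((n.choose m : ℕ) : ℂ) •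
      ((X : V[X]) ^ (n - m) * C (P.coeff n * Dit m b)) else 0) =
      C (P.coeff n) * (lamAddD ^ n) (C b) := by
    intro n
    rw [finsum_eq_sum_of_support_subset _ (s := Finset.range (n + 1)) fun m hm => ?_,
      lamAddD_pow_C, Finset.mul_sum]
    · refine Finset.sum_congr rfl fun m hm => ?_
      rw [if_pos (Nat.lt_succ_iff.mp (Finset.mem_range.mp hm)), mul_smul_comm, ← mul_assoc,
        ← X_pow_mul, mul_assoc, ← C_mul]
    · by_contra hmn
      simp_all
  rw [lamShift, finsum_congr inner,
    finsum_eq_sum_of_support_subset _ (s := P.support) fun n hn => ?_]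
  · rfl
  · by_contra hn'
    simp_all

lemma lamShiftₗ_monomial (Q : V[X]) (n : ℕ) (a : V) :
    lamShiftₗ Q (monomial n a) = C a * (lamAddD ^ n) Q := by
  rw [lamShiftₗ, lsum_apply, sum_monomial_index _ _ (map_zero (_ : V →ₗ[ℂ] V[X]))]
  rfl

lemma lamShiftₗ_C (Q : V[X]) (a : V) : lamShiftₗ Q (C a) = C a * Q := by
  simpa using lamShiftₗ_monomial Q 0 a

lemma commute_lamShiftₗ_lamAddD (Q : V[X]) : Commute (lamShiftₗ Q) lamAddD := by
  refine LinearMap.ext fun P => ?_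
  induction P using Polynomial.induction_on' with
  | add P P' hP hP' => simp only [map_add, hP, hP']
  | monomial n a =>
    rw [Module.End.mul_apply, Module.End.mul_apply, lamAddD_monomial, map_add,
      lamShiftₗ_monomial, lamShiftₗ_monomial, lamShiftₗ_monomial, lamAddD_C_mul, pow_succ',
      Module.End.mul_apply, add_comm]

lemma negLam_mul_C (P : V[X]) (c : V) : negLam (P * C c) = lamShiftₗ (C c) (negLam P) := by
  induction P using Polynomial.induction_on' with
  | add P Q hP hQ => rw [add_mul, negLam_add, negLam_add, hP, hQ, map_add]
  | monomial n a =>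
    rw [monomial_mul_C, negLam_monomial, negLam_monomial, map_smul, ← Module.End.mul_apply,
      ((commute_lamShiftₗ_lamAddD _).pow_right n).eq, Module.End.mul_apply, lamShiftₗ_C, C_mul]

lemma negLam_lamShift_negLam (Q : V[X]) (c : V) : negLam (lamShift (negLam Q) c) = Q * C c := by
  rw [← lamShiftₗ_C_apply, ← negLam_mul_C, negLam_negLam]

lemma sgn_add (x y : ZMod 2) : sgn (x + y) = sgn x * sgn y := by
  rw [sgn, sgn, sgn, ZMod.val_add, ← neg_one_pow_eq_pow_mod_two, pow_add]

lemma sgn_zero : sgn (0 : ZMod 2) = 1 := by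
  rw [sgn, ZMod.val_zero, pow_zero]

lemma sgn_mul_self (x : ZMod 2) : sgn x * sgn x = 1 := by
  rw [← sgn_add, CharTwo.add_self_eq_zero, sgn_zero]

lemma neg_one_pow_val_mul (x y : ZMod 2) : (-1 : ℂ) ^ (x.val * y.val) = sgn (x * y) := by
  rw [sgn, ZMod.val_mul, ← neg_one_pow_eq_pow_mod_two]

lemma one_mem_grading_zero : (1 : V) ∈ grading (0 : ZMod 2) :=
  letI := DiffSuperAlg.gradedAlgebra (V := V)
  SetLike.one_mem_graded _

lemma mul_mem_grading {i j : ZMod 2} {a b : V} (ha : a ∈ grading i) (hb : b ∈ grading j) :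
    a * b ∈ grading (i + j) :=
  letI := DiffSuperAlg.gradedAlgebra (V := V)
  SetLike.mul_mem_graded ha hb

def gpartₗ (π : ZMod 2) : V →ₗ[ℂ] V :=
  letI := DiffSuperAlg.gradedAlgebra (V := V)
  GradedAlgebra.proj grading π

lemma gpartₗ_of_mem_same {π : ZMod 2} {x : V} (hx : x ∈ grading π) : gpartₗ π x = x :=
  letI := DiffSuperAlg.gradedAlgebra (V := V)
  DirectSum.decompose_of_mem_same _ hx

lemma gpartₗ_of_mem_ne {π σ : ZMod 2} {x : V} (hx : x ∈ grading π) (h : π ≠ σ) :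
    gpartₗ σ x = 0 :=
  letI := DiffSuperAlg.gradedAlgebra (V := V)
  DirectSum.decompose_of_mem_ne _ hx h

lemma C_mul_eq_sgn_smul {j π : ZMod 2} {b : V} (hb : b ∈ grading j) {Q : V[X]}
    (hQ : ∀ n, Q.coeff n ∈ grading π) : C b * Q = sgn (j * π) • (Q * C b) := by
  ext n
  rw [coeff_C_mul, coeff_smul, coeff_mul_C, DiffSuperAlg.superComm j π b hb _ (hQ n),
    neg_one_pow_val_mul]

end PDO

namespace LambdaBracket

open PDO

variable {V : Type*} [DiffSuperAlg V] (B : LambdaBracket V)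

lemma br_zero_left (b : V) : B.br 0 b = 0 := by
  simpa using B.add_left 0 0 b

lemma br_zero_right (a : V) : B.br a 0 = 0 := by
  simpa using B.add_right a 0 0

lemma br_one_left (a : V) : B.br 1 a = 0 := by
  have h := B.sesq_left 1 a
  rw [D_one, br_zero_left, eq_comm, neg_eq_zero, ← mul_zero X] at h
  exact isRegular_X.left h

lemma br_one_right {i : ZMod 2} {a : V} (ha : a ∈ grading i) : B.br a 1 = 0 := by
  simpa [sgn_zero] using B.leibniz_left i 0 a ha 1 one_mem_grading_zero 1

def SkewPair (i j : ZMod 2) (a b : V) : Prop :=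
  B.br a b = -(sgn (i * j) • negLam (B.br b a))

variable {B}

lemma SkewPair.symm {i j : ZMod 2} {a b : V} (h : B.SkewPair i j a b) : B.SkewPair j i b a := by
  have h' := congrArg negLam h
  rw [negLam_neg, negLam_smul, negLam_negLam] at h'
  rw [SkewPair, h', smul_neg, neg_neg, smul_smul, mul_comm j i, sgn_mul_self, one_smul]

lemma SkewPair.zero_right (i j : ZMod 2) (a : V) : B.SkewPair i j a 0 := by
  rw [SkewPair, br_zero_left, br_zero_right, ← negLamₗ_apply, map_zero, smul_zero, neg_zero]

lemma SkewPair.add_right {i j : ZMod 2} {a b b' : V} (h : B.SkewPair i j a b)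
    (h' : B.SkewPair i j a b') : B.SkewPair i j a (b + b') := by
  rw [SkewPair, B.add_right, B.add_left, negLam_add, h, h', smul_add, neg_add]

lemma SkewPair.smul_right {i j : ZMod 2} {a b : V} (c : ℂ) (h : B.SkewPair i j a b) :
    B.SkewPair i j a (c • b) := by
  rw [SkewPair, B.smul_right, B.smul_left, negLam_smul, h, smul_neg, smul_comm]

lemma SkewPair.D_right {i j : ZMod 2} {a b : V} (h : B.SkewPair i j a b) :
    B.SkewPair i j a (D b) := by
  rw [SkewPair, B.sesq_right, B.sesq_left, h, negLam_neg, negLam_X_mul, lamAddD_apply]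
  simp only [mul_neg, mul_smul_comm, Dp_neg, Dp_smul, neg_neg, smul_add, neg_add]

lemma SkewPair.Dit_right {i j : ZMod 2} {a b : V} (h : B.SkewPair i j a b) (n : ℕ) :
    B.SkewPair i j a (Dit n b) := by
  induction n with
  | zero => exact h
  | succ n ih => rw [Dit_succ_apply']; exact ih.D_right

lemma SkewPair.one_right {i : ZMod 2} {a : V} (ha : a ∈ grading i) : B.SkewPair i 0 a 1 := by
  rw [SkewPair, br_one_left, br_one_right B ha, ← negLamₗ_apply, map_zero, smul_zero, neg_zero]

lemma SkewPair.mul_right {i j k : ZMod 2} {a b c : V} (ha : a ∈ grading i) (hb : b ∈ grading j)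
    (hc : c ∈ grading k) (hab : B.SkewPair i j a b) (hac : B.SkewPair i k a c) :
    B.SkewPair i (j + k) a (b * c) := by
  have hba : negLam (lamShift (B.br b a) c) = -(sgn (j * i) • (B.br a b * C c)) := by
    rw [hab.symm, ← lamShiftₗ_C_apply, map_neg, map_smul, lamShiftₗ_C_apply, negLam_neg,
      negLam_smul, negLam_lamShift_negLam]
  have hca : negLam (lamShift (B.br c a) b) = -(sgn (k * i) • (B.br a c * C b)) := by
    rw [hac.symm, ← lamShiftₗ_C_apply, map_neg, map_smul, lamShiftₗ_C_apply, negLam_neg,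
      negLam_smul, negLam_lamShift_negLam]
  have hcomm : C b * B.br a c = sgn (j * (i + k)) • (B.br a c * C b) :=
    C_mul_eq_sgn_smul hb (B.even i k a ha c hc)
  rw [SkewPair, B.leibniz_left i j a ha b hb c, B.leibniz_right j k i b hb c hc a ha, negLam_add,
    negLam_smul, negLam_smul, hba, hca, hcomm]
  simp only [smul_neg, neg_neg, smul_add, smul_smul, neg_add, ← sgn_add]
  have sign_ab : ∀ x y z : ZMod 2, x * (y + z) + (z * x + y * x) = 0 := by decide
  have sign_ac : ∀ x y z : ZMod 2,
      x * y + y * (x + z) = x * (y + z) + (y * (z + x) + z * x) := by decide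
  rw [sign_ab, sign_ac, sgn_zero, one_smul]

variable (B) in
def skewPartners (i : ZMod 2) (a : V) : Submodule ℂ V where
  carrier := {b | ∀ j, B.SkewPair i j a (gpartₗ j b)}
  zero_mem' j := by simpa only [map_zero] using SkewPair.zero_right i j a
  add_mem' hb hb' j := by simpa only [map_add] using (hb j).add_right (hb' j)
  smul_mem' c _ hb j := by simpa only [map_smul] using (hb j).smul_right c

lemma SkewPair.mem_skewPartners {i π : ZMod 2} {a b : V}
    (hb : b ∈ grading π) (h : B.SkewPair i π a b) : b ∈ B.skewPartners i a := by
  intro j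
  by_cases hj : π = j
  · rwa [← hj, gpartₗ_of_mem_same hb]
  · rw [gpartₗ_of_mem_ne hb hj]
    exact SkewPair.zero_right i j a

lemma SkewPair.of_generators {ι : Type*} {u : ι → V} {pu : ι → ZMod 2}
    (hu : ∀ t, u t ∈ grading (pu t)) (hgen : diffGen (Set.range u)) {i : ZMod 2} {a : V}
    (ha : a ∈ grading i) (h : ∀ t, B.SkewPair i (pu t) a (u t)) {j : ZMod 2} {b : V}
    (hb : b ∈ grading j) : B.SkewPair i j a b := by
  set S : Set V := {x | ∃ v ∈ Set.range u, ∃ n : ℕ, x = Dit n v}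
  have monomials : ∀ x ∈ Submonoid.closure S, ∃ π, x ∈ grading π ∧ B.SkewPair i π a x := by
    intro x hx
    induction hx using Submonoid.closure_induction with
    | mem x hx =>
      obtain ⟨_, ⟨t, rfl⟩, n, rfl⟩ := hx
      exact ⟨pu t, Dit_mem (hu t) n, (h t).Dit_right n⟩
    | one => exact ⟨0, one_mem_grading_zero, .one_right ha⟩
    | mul x y _ _ hx hy =>
      obtain ⟨π, hxπ, hx⟩ := hx
      obtain ⟨σ, hyσ, hy⟩ := hy
      exact ⟨π + σ, mul_mem_grading hxπ hyσ, hx.mul_right ha hxπ hyσ hy⟩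
  have hspan : Submodule.span ℂ (Submonoid.closure S : Set V) = ⊤ := by
    rw [← Algebra.adjoin_eq_span, hgen, Algebra.top_toSubmodule]
  have hall : b ∈ B.skewPartners i a := by
    refine Submodule.span_le.mpr (fun x hx => ?_) (hspan ▸ Submodule.mem_top)
    obtain ⟨_, hxπ, hx⟩ := monomials x hx
    exact hx.mem_skewPartners hxπ
  simpa only [gpartₗ_of_mem_same hb] using hall j

end LambdaBracket

/-- Let `V` be a differential superalgebra generated, as a differential
algebra, by a homogeneous family `u : ι → V`, and let `B` be a λ-bracket on `V`
(bilinear, sesquilinear, satisfying both Leibniz rules; cf. the master formula).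
Then `B` satisfies the skew-symmetry axiom `{a_λ b} = -(-1)^(|a||b|){b_(-λ-∂) a}` for
all (homogeneous) `a, b ∈ V` if and only if it does so on all pairs of generators. -/
theorem skew_symmetry_iff_on_generators (V : Type*) [DiffSuperAlg V]
    (B : LambdaBracket V) {ι : Type*} (u : ι → V) (pu : ι → ZMod 2)
    (hu : ∀ i, u i ∈ DiffSuperAlg.grading (V := V) (pu i))
    (hgen : PDO.diffGen (Set.range u)) :
    PDO.SkewSymm B ↔
      ∀ i j : ι, B.br (u i) (u j) =
        -(PDO.sgn (pu i * pu j) • PDO.negLam (B.br (u j) (u i))) := by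
  refine ⟨fun h i j => h _ _ _ (hu i) _ (hu j), fun hgens i j a ha b hb => ?_⟩
  have hb_generators : ∀ t, B.SkewPair j (pu t) b (u t) := fun t =>
    (LambdaBracket.SkewPair.of_generators hu hgen (hu t) (hgens t) hb).symm
  exact (LambdaBracket.SkewPair.of_generators hu hgen hb hb_generators ha).symm
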